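/- Define ψ^n(p) = Σ_{k=0}^n (C(n,k) p^k (1-p)^{n-k})^2 and, for 0 ≤ u ≤ n/4, φ^n(u) = ψ^n((1 - sqrt(1 - 4u/n))/2). Then for fixed u ≥ 0 the sequence n ↦ φ^n(u) is monotone increasing in n over all integers n ≥ 4u. -/

import Mathlib

/-- `ψⁿ(p) = Σ_{k=0}^n (C(n,k) pᵏ (1-p)ⁿ⁻ᵏ)²`. -/
noncomputable def psi (n : ℕ) (p : ℝ) : ℝ :=
  ∑ k ∈ Finset.range (n + 1), ((n.choose k : ℝ) * p ^ k * (1 - p) ^ (n - k)) ^ 2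

/-- `pⁿ(u) = (1 - √(1 - 4u/n))/2`, a root of `p(1-p) = u/n`. -/
noncomputable def pn (n : ℕ) (u : ℝ) : ℝ := (1 - Real.sqrt (1 - 4 * u / n)) / 2

/-- `φⁿ(u) = ψⁿ(pⁿ(u))`. -/
noncomputable def phi (n : ℕ) (u : ℝ) : ℝ := psi n (pn n u)

/-!
By Parseval, `ψⁿ(p)` is the mean over the circle of `|p e^{iθ} + 1 - p|^{2n}
= (1 - 2p(1-p)(1 - cos θ))^n`. At `p = pⁿ(u)` we have `p(1-p) = u/n`, so `φⁿ(u)` is the mean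
of `(1 - a_θ/n)^n` with `a_θ = 2u(1 - cos θ) ≤ 4u`, and `n ↦ (1 - a/n)^n` is increasing on
`n ≥ a` by weighted AM–GM.
-/

open Real Complex Finset

theorem cexp_mul_I_pow_mul_cexp_neg_mul_I_pow (θ : ℝ) (j k : ℕ) :
    cexp (θ * I) ^ j * cexp (-θ * I) ^ k = cexp (((j - k : ℤ) : ℂ) * θ * I) := by
  rw [← Complex.exp_nat_mul, ← Complex.exp_nat_mul, ← Complex.exp_add]
  push_cast
  ring_nf

theorem integral_cexp_int_mul_mul_I (d : ℤ) :
    ∫ θ in (0 : ℝ)..2 * π, cexp (d * θ * I) = if d = 0 then (2 * π : ℂ) else 0 := by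
  split_ifs with hd
  · simp [hd]
  · have hc : (d : ℂ) * I ≠ 0 := mul_ne_zero (Int.cast_ne_zero.mpr hd) I_ne_zero
    simp_rw [mul_right_comm _ _ I]
    rw [integral_exp_mul_complex hc]
    have h2π : (d : ℂ) * I * (2 * π) = d * (2 * π * I) := by ring
    rw [Complex.ofReal_mul, Complex.ofReal_ofNat, h2π, exp_int_mul_two_pi_mul_I]
    simp

theorem integral_sum_mul_cexp_pow_mul_sum_mul_cexp_neg_pow (a b : ℕ → ℂ) (N : ℕ) :
    ∫ θ in (0 : ℝ)..2 * π,
        (∑ j ∈ range N, a j * cexp (θ * I) ^ j) * ∑ k ∈ range N, b k * cexp (-θ * I) ^ k =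
      2 * π * ∑ j ∈ range N, a j * b j := by
  have hterm : ∀ j k, ∫ θ in (0 : ℝ)..2 * π, a j * cexp (θ * I) ^ j * (b k * cexp (-θ * I) ^ k) =
      if j = k then 2 * π * (a j * b j) else 0 := by
    intro j k
    simp_rw [mul_mul_mul_comm, cexp_mul_I_pow_mul_cexp_neg_mul_I_pow,
      intervalIntegral.integral_const_mul, integral_cexp_int_mul_mul_I, sub_eq_zero, Nat.cast_inj]
    split_ifs with h
    · subst h; ring
    · simp
  simp_rw [sum_mul_sum]
  rw [intervalIntegral.integral_finsetSum fun j _ =>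
    (continuous_finsetSum _ fun k _ => by fun_prop).intervalIntegrable _ _, mul_sum]
  refine sum_congr rfl fun j hj => ?_
  rw [intervalIntegral.integral_finsetSum fun k _ =>
    (by fun_prop : Continuous _).intervalIntegrable _ _]
  simp_rw [hterm, sum_ite_eq, if_pos hj]

theorem ofReal_one_sub_two_mul_mul_one_sub_cos (p θ : ℝ) :
    ((1 - 2 * p * (1 - p) * (1 - Real.cos θ) : ℝ) : ℂ) =
      (p * cexp (θ * I) + (1 - p)) * (p * cexp (-θ * I) + (1 - p)) := by
  have hprod : cexp (θ * I) * cexp (-θ * I) = 1 := by rw [← Complex.exp_add]; simp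
  push_cast
  linear_combination (-p ^ 2) * hprod + p * (1 - p) * Complex.two_cos (x := (θ : ℂ))

theorem mul_add_one_sub_pow (p : ℝ) (n : ℕ) (z : ℂ) :
    (p * z + (1 - p)) ^ n =
      ∑ j ∈ range (n + 1), (((n.choose j : ℝ) * p ^ j * (1 - p) ^ (n - j) : ℝ) : ℂ) * z ^ j := by
  rw [add_pow]
  refine sum_congr rfl fun j _ => ?_
  push_cast
  ring

theorem integral_one_sub_two_mul_mul_one_sub_cos_pow (p : ℝ) (n : ℕ) :
    ∫ θ in (0 : ℝ)..2 * π, (1 - 2 * p * (1 - p) * (1 - Real.cos θ)) ^ n = 2 * π * psi n p := by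
  apply Complex.ofReal_injective
  rw [← intervalIntegral.integral_ofReal]
  simp_rw [Complex.ofReal_pow, ofReal_one_sub_two_mul_mul_one_sub_cos, mul_pow,
    mul_add_one_sub_pow, integral_sum_mul_cexp_pow_mul_sum_mul_cexp_neg_pow, psi]
  push_cast
  simp_rw [sq]

theorem one_sub_div_pow_le_one_sub_div_pow {a : ℝ} {m n : ℕ} (ham : a ≤ m) (hmn : m ≤ n) :
    (1 - a / m) ^ m ≤ (1 - a / n) ^ n := by
  rcases m.eq_zero_or_pos with rfl | hm
  · have ha : a / n ≤ 0 := div_nonpos_of_nonpos_of_nonneg (by simpa using ham) n.cast_nonneg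
    simpa using one_le_pow₀ (n := n) (by linarith : 1 ≤ 1 - a / n)
  have hmR : (0 : ℝ) < m := by exact_mod_cast hm
  have hnR : (0 : ℝ) < n := by exact_mod_cast hm.trans_le hmn
  have hx : 0 ≤ 1 - a / m := sub_nonneg.mpr (div_le_one_of_le₀ ham hmR.le)
  have hamgm := geom_mean_le_arith_mean2_weighted (w₁ := m / n) (w₂ := (n - m) / n)
    (by positivity) (div_nonneg (sub_nonneg.mpr (Nat.cast_le.mpr hmn)) hnR.le) hx zero_le_one
    (by field_simp; ring)
  rw [one_rpow, mul_one, mul_one,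
    show (m / n : ℝ) * (1 - a / m) + (n - m) / n = 1 - a / n by field_simp; ring] at hamgm
  calc (1 - a / m) ^ m = ((1 - a / m) ^ ((m : ℝ) / n)) ^ n := by
        rw [← rpow_natCast _ n, ← rpow_mul hx, div_mul_cancel₀ _ hnR.ne', rpow_natCast]
    _ ≤ (1 - a / n) ^ n := pow_le_pow_left₀ (by positivity) hamgm n

-- Also true at `k = 0`, where both sides vanish since `x / 0 = 0`.
theorem pn_mul_one_sub_pn {k : ℕ} {u : ℝ} (hk : 4 * u ≤ k) : pn k u * (1 - pn k u) = u / k := by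
  have hs : √(1 - 4 * u / k) ^ 2 = 1 - 4 * u / k :=
    sq_sqrt (sub_nonneg.mpr (div_le_one_of_le₀ hk k.cast_nonneg))
  unfold pn
  linear_combination (-1 / 4 : ℝ) * hs

theorem two_pi_mul_phi {k : ℕ} {u : ℝ} (hk : 4 * u ≤ k) :
    2 * π * phi k u = ∫ θ in (0 : ℝ)..2 * π, (1 - 2 * u * (1 - Real.cos θ) / k) ^ k := by
  rw [phi, ← integral_one_sub_two_mul_mul_one_sub_cos_pow]
  refine intervalIntegral.integral_congr fun θ _ => ?_
  rw [mul_assoc 2, pn_mul_one_sub_pn hk]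
  ring

theorem two_mul_mul_one_sub_cos_le {u : ℝ} {m : ℕ} (hm : 4 * u ≤ m) (θ : ℝ) :
    2 * u * (1 - Real.cos θ) ≤ m := by
  have := Real.cos_le_one θ
  have := Real.neg_one_le_cos θ
  rcases le_total 0 u with hu | hu <;> nlinarith [(m.cast_nonneg : (0 : ℝ) ≤ m)]

theorem phi_monotone_in_n_general (u : ℝ) (m n : ℕ)
    (hm : 4 * u ≤ (m : ℝ)) (hmn : m ≤ n) :
    phi m u ≤ phi n u := by
  have hn : 4 * u ≤ (n : ℝ) := hm.trans (Nat.cast_le.mpr hmn)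
  refine le_of_mul_le_mul_left ?_ two_pi_pos
  rw [two_pi_mul_phi hm, two_pi_mul_phi hn]
  exact intervalIntegral.integral_mono_on two_pi_pos.le
    ((by fun_prop : Continuous _).intervalIntegrable _ _)
    ((by fun_prop : Continuous _).intervalIntegrable _ _)
    fun θ _ => one_sub_div_pow_le_one_sub_div_pow (two_mul_mul_one_sub_cos_le hm θ) hmn

theorem phi_monotone_in_n (u : ℝ) (hu : 0 ≤ u) (m n : ℕ)
    (hm : 4 * u ≤ (m : ℝ)) (hmn : m ≤ n) :
    phi m u ≤ phi n u :=
  phi_monotone_in_n_general u m n hm hmn
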